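/- Let J : V → W be a linear map and L_W ⊆ W ⊕ W* a lagrangian subspace. Then the backward image J⁻¹∘L_W := { (X, J*β) ∈ V ⊕ V* : X ∈ V, β ∈ W*, (J(X), β) ∈ L_W } is a lagrangian subspace of V ⊕ V*. -/

import Mathlib

/-- The backward image of `L_W` under `J`. -/
def backwardImage {V W : Type*} [AddCommGroup V] [Module ℝ V] [AddCommGroup W] [Module ℝ W]
    (J : V →ₗ[ℝ] W) (LW : Submodule ℝ (W × Module.Dual ℝ W)) :
    Set (V × Module.Dual ℝ V) :=
  {p | ∃ (X : V) (β : Module.Dual ℝ W), p = (X, J.dualMap β) ∧ (J X, β) ∈ LW}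

/-!
Isotropy of `J⁻¹∘L_W` is a direct computation, as `(J*β)(Y) = β(J Y)`. For maximality let
`(X, α)` be orthogonal to `J⁻¹∘L_W`. Since `(Y, 0)` lies in `J⁻¹∘L_W` for `Y ∈ ker J`, `α` kills
`ker J`, so `α = J*β₀` for some `β₀`. Then `(J X, β₀)` is orthogonal to `L_W ∩ (im J × W*)`, whose
orthogonal is `L_W + (0 × (im J)⁰)` by double orthogonality in the finite-dimensional `W ⊕ W*`.
Hence `(J X, β₀ - ζ) ∈ L_W` for some `ζ ∈ (im J)⁰`, and `J*(β₀ - ζ) = α`.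
-/

namespace LinearMap.BilinForm

variable {R M : Type*} [CommRing R] [AddCommGroup M] [Module R M]

theorem orthogonal_sup (B : LinearMap.BilinForm R M) (N N' : Submodule R M) :
    B.orthogonal (N ⊔ N') = B.orthogonal N ⊓ B.orthogonal N' := by
  refine le_antisymm (le_inf (B.orthogonal_le le_sup_left) (B.orthogonal_le le_sup_right)) ?_
  rintro x ⟨hx, hx'⟩ _ hm
  obtain ⟨n, hn, n', hn', rfl⟩ := Submodule.mem_sup.mp hm
  rw [map_add, LinearMap.add_apply, hx n hn, hx' n' hn', add_zero]

end LinearMap.BilinForm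

section ProdDualPairing

open LinearMap.BilinForm

variable (K W : Type*) [Field K] [AddCommGroup W] [Module K W]

def prodDualPairing : LinearMap.BilinForm K (W × Module.Dual K W) :=
  let evalPairing : LinearMap.BilinForm K (W × Module.Dual K W) :=
    LinearMap.id.compl₁₂ (LinearMap.snd K W (Module.Dual K W))
      (LinearMap.fst K W (Module.Dual K W))
  evalPairing + evalPairing.flip

variable {K W}

@[simp]
theorem prodDualPairing_apply (x y : W × Module.Dual K W) :
    prodDualPairing K W x y = x.2 y.1 + y.2 x.1 :=
  rfl

theorem prodDualPairing_isRefl : (prodDualPairing K W).IsRefl := by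
  intro x y h
  simpa [add_comm] using h

theorem prodDualPairing_nondegenerate : (prodDualPairing K W).Nondegenerate := by
  refine (LinearMap.IsRefl.nondegenerate_iff_separatingLeft (B := prodDualPairing K W)
    prodDualPairing_isRefl).mpr fun x hx => Prod.ext ?_ ?_
  · exact (Module.forall_dual_apply_eq_zero_iff K x.1).mp fun φ => by simpa using hx (0, φ)
  · ext w
    simpa using hx (w, 0)

theorem prodDualPairing_orthogonal_prod_bot_dualAnnihilator (U : Submodule K W) :
    (prodDualPairing K W).orthogonal ((⊥ : Submodule K W).prod U.dualAnnihilator) =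
      U.prod ⊤ := by
  ext x
  simp only [mem_orthogonal_iff, Submodule.mem_prod, Submodule.mem_bot, Submodule.mem_top,
    and_true]
  rw [← Subspace.forall_mem_dualAnnihilator_apply_eq_zero_iff]
  constructor
  · intro h φ hφ
    simpa using h (0, φ) ⟨rfl, hφ⟩
  · rintro h ⟨_, φ⟩ ⟨rfl, hφ⟩
    simpa using h φ hφ

theorem prodDualPairing_orthogonal_inf_prod_top [FiniteDimensional K W]
    {L : Submodule K (W × Module.Dual K W)} (hL : (prodDualPairing K W).orthogonal L = L)
    (U : Submodule K W) :
    (prodDualPairing K W).orthogonal (L ⊓ U.prod ⊤) =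
      L ⊔ (⊥ : Submodule K W).prod U.dualAnnihilator := by
  rw [← orthogonal_orthogonal prodDualPairing_nondegenerate prodDualPairing_isRefl (L ⊔ _),
    orthogonal_sup, hL, prodDualPairing_orthogonal_prod_bot_dualAnnihilator]

end ProdDualPairing

section BackwardImage

variable {V W : Type*} [AddCommGroup V] [Module ℝ V] [AddCommGroup W] [Module ℝ W]
  (J : V →ₗ[ℝ] W) {LW : Submodule ℝ (W × Module.Dual ℝ W)}

theorem backwardImage_isotropic (hL : LW ≤ (prodDualPairing ℝ W).orthogonal LW)
    {p q : V × Module.Dual ℝ V} (hp : p ∈ backwardImage J LW) (hq : q ∈ backwardImage J LW) :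
    q.2 p.1 + p.2 q.1 = 0 := by
  obtain ⟨X, β, rfl, hXβ⟩ := hp
  obtain ⟨Y, γ, rfl, hYγ⟩ := hq
  exact hL hXβ (J Y, γ) hYγ

theorem mem_backwardImage_of_isOrtho [FiniteDimensional ℝ W]
    (hL : (prodDualPairing ℝ W).orthogonal LW = LW) {X : V} {α : Module.Dual ℝ V}
    (h : ∀ q ∈ backwardImage J LW, q.2 X + α q.1 = 0) : (X, α) ∈ backwardImage J LW := by
  have hα : α ∈ (LinearMap.ker J).dualAnnihilator := by
    refine (Submodule.mem_dualAnnihilator α).mpr fun Y hY => ?_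
    have hY0 : (Y, 0) ∈ backwardImage J LW :=
      ⟨Y, 0, by simp, by rw [LinearMap.mem_ker.mp hY]; exact LW.zero_mem⟩
    simpa using h _ hY0
  obtain ⟨β₀, rfl⟩ : α ∈ LinearMap.range J.dualMap := by
    rwa [LinearMap.range_dualMap_eq_dualAnnihilator_ker]
  have hortho :
      (J X, β₀) ∈ (prodDualPairing ℝ W).orthogonal (LW ⊓ (LinearMap.range J).prod ⊤) := by
    rintro ⟨_, γ⟩ ⟨hγ, ⟨Y, rfl⟩, -⟩
    simpa [add_comm] using h (Y, J.dualMap γ) ⟨Y, γ, rfl, hγ⟩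
  rw [prodDualPairing_orthogonal_inf_prod_top hL] at hortho
  obtain ⟨u, hu, ⟨_, ζ⟩, ⟨rfl, hζ⟩, hu_add⟩ := Submodule.mem_sup.mp hortho
  have hJζ : J.dualMap ζ = 0 := (LinearMap.ker_dualMap_eq_dualAnnihilator_range J).ge hζ
  refine ⟨X, β₀ - ζ, by rw [map_sub, hJζ, sub_zero], ?_⟩
  rwa [eq_sub_of_add_eq hu_add, Prod.mk_sub_mk, sub_zero] at hu

end BackwardImage

theorem backwardImage_lagrangian_general {V W : Type*} [AddCommGroup V] [Module ℝ V]
    [AddCommGroup W] [Module ℝ W] [FiniteDimensional ℝ W]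
    (J : V →ₗ[ℝ] W) (LW : Submodule ℝ (W × Module.Dual ℝ W))
    (hLW : ∀ x : W × Module.Dual ℝ W, x ∈ LW ↔ ∀ y ∈ LW, y.2 x.1 + x.2 y.1 = 0) :
    ∀ p : V × Module.Dual ℝ V,
      p ∈ backwardImage J LW ↔ ∀ q ∈ backwardImage J LW, q.2 p.1 + p.2 q.1 = 0 := by
  have hL : (prodDualPairing ℝ W).orthogonal LW = LW := by
    ext x
    exact (hLW x).symm
  exact fun p => ⟨fun hp _ hq => backwardImage_isotropic J hL.ge hp hq,
    fun h => mem_backwardImage_of_isOrtho J hL h⟩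

/-- The backward image of a lagrangian subspace under a linear map
is lagrangian for the canonical pairing. -/
theorem backwardImage_lagrangian {V W : Type*} [AddCommGroup V] [Module ℝ V]
    [FiniteDimensional ℝ V] [AddCommGroup W] [Module ℝ W] [FiniteDimensional ℝ W]
    (J : V →ₗ[ℝ] W) (LW : Submodule ℝ (W × Module.Dual ℝ W))
    (hLW : ∀ x : W × Module.Dual ℝ W, x ∈ LW ↔ ∀ y ∈ LW, y.2 x.1 + x.2 y.1 = 0) :
    ∀ p : V × Module.Dual ℝ V,
      p ∈ backwardImage J LW ↔ ∀ q ∈ backwardImage J LW, q.2 p.1 + p.2 q.1 = 0 :=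
  backwardImage_lagrangian_general J LW hLW
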